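/- Let $X_1, X_2, \ldots$ be random variables with means $\mu_i$, variances $\sigma_i^2$, and covariances satisfying $\mathrm{Cov}(X_i, X_j) \le \rho_{j-i}\sigma_i\sigma_j$ for $i \le j$, where $0 \le \rho_m \le 1$ for all $m \ge 0$. If $\sum_{m=1}^\infty \rho_m < \infty$ and $\sum_{i=1}^\infty \sigma_i^2 (\log i)^2 / i^2 < \infty$, then $\frac{1}{n}\sum_{i=1}^n X_i - \frac{1}{n}\sum_{i=1}^n \mu_i \to 0$ almost surely as $n \to \infty$. -/

import Mathlib

/-!
Write `Yᵢ = Xᵢ - μᵢ` and `Sₙ = Y₁ + ⋯ + Yₙ`. Bounding each covariance by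
`ρ_{|i-j|} (σᵢ² + σⱼ²) / 2` gives `E (S_b - S_a)² ≤ C ∑_{a<i≤b} σᵢ²` with `C = ρ₀ + 2 ∑ ρₘ₊₁`.
By Rademacher–Menshov chaining, `(Sₙ - S_{2ᵏ})² ≤ (k + 1) Gₖ` for `2ᵏ < n ≤ 2ᵏ⁺¹`, where `Gₖ` is
the sum of the squared increments of `S` over the dyadic subintervals of `(2ᵏ, 2ᵏ⁺¹]`, and
`E Gₖ ≤ (k + 1) C ∑_{2ᵏ<i≤2ᵏ⁺¹} σᵢ²`. Since `k ≍ log i` on that block, summability of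
`σᵢ² (log i)² / i²` makes `∑ₖ E Wₖ` finite for `Wₖ = (S_{2ᵏ}² + (k + 1) Gₖ) / 4ᵏ`; hence
`Wₖ → 0` almost surely, and `(Sₙ / n)² ≤ 2 Wₖ` for `2ᵏ < n ≤ 2ᵏ⁺¹`.
-/

open MeasureTheory Filter Finset Topology

/-- The sum of the squared block sums of `c` over all dyadic subintervals of `(a, a + 2ᵏ]`. -/
noncomputable def dyadicSqSum (c : ℕ → ℝ) : ℕ → ℕ → ℝ
  | a, 0 => (∑ i ∈ Ioc a (a + 1), c i) ^ 2
  | a, k + 1 => (∑ i ∈ Ioc a (a + 2 ^ (k + 1)), c i) ^ 2 + dyadicSqSum c a k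
      + dyadicSqSum c (a + 2 ^ k) k

namespace dyadicSqSum

variable (c : ℕ → ℝ)

lemma nonneg (a k : ℕ) : 0 ≤ dyadicSqSum c a k := by
  induction k generalizing a with
  | zero => exact sq_nonneg _
  | succ k ih => exact add_nonneg (add_nonneg (sq_nonneg _) (ih a)) (ih _)

lemma sq_sum_Ioc_two_pow_le (a k : ℕ) :
    (∑ i ∈ Ioc a (a + 2 ^ k), c i) ^ 2 ≤ dyadicSqSum c a k := by
  cases k with
  | zero => exact le_rfl
  | succ k =>
    have := nonneg c a k
    have := nonneg c (a + 2 ^ k) k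
    simp only [dyadicSqSum]
    linarith

/-- The Rademacher–Menshov chaining bound. -/
lemma sq_sum_Ioc_le {k m : ℕ} (hm : m ≤ 2 ^ k) (a : ℕ) :
    (∑ i ∈ Ioc a (a + m), c i) ^ 2 ≤ (k + 1) * dyadicSqSum c a k := by
  induction k generalizing a m with
  | zero =>
    interval_cases m
    · simpa using nonneg c a 0
    · simp [dyadicSqSum]
  | succ k ih =>
    have hG := nonneg c a k
    have hG' := nonneg c (a + 2 ^ k) k
    have hS := sq_nonneg (∑ i ∈ Ioc a (a + 2 ^ (k + 1)), c i)
    change _ ≤ _ * (_ + dyadicSqSum c a k + dyadicSqSum c (a + 2 ^ k) k)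
    push_cast
    rcases le_or_gt m (2 ^ k) with hmk | hmk
    · nlinarith [ih hmk a]
    · obtain ⟨m', rfl⟩ := Nat.exists_eq_add_of_le hmk.le
      have hm' : m' ≤ 2 ^ k := by rw [pow_succ] at hm; omega
      rw [← add_assoc, ← sum_Ioc_consecutive c (n := a + 2 ^ k) (Nat.le_add_right _ _)
        (Nat.le_add_right _ _)]
      set x := ∑ i ∈ Ioc a (a + 2 ^ k), c i
      set y := ∑ i ∈ Ioc (a + 2 ^ k) (a + 2 ^ k + m'), c i
      have hx : x ^ 2 ≤ dyadicSqSum c a k := sq_sum_Ioc_two_pow_le c a k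
      have hy : y ^ 2 ≤ (k + 1) * dyadicSqSum c (a + 2 ^ k) k := ih hm' _
      -- `(x + y)² ≤ (k + 2) x² + (k + 2)/(k + 1) y²`
      have hxy : (x + y) ^ 2 * (k + 1) ≤ (k + 2) * ((k + 1) * x ^ 2 + y ^ 2) := by
        nlinarith [sq_nonneg ((k + 1) * x - y)]
      have hxy' : (k + 1) * x ^ 2 + y ^ 2
          ≤ (k + 1) * (dyadicSqSum c a k + dyadicSqSum c (a + 2 ^ k) k) := by
        linarith [mul_le_mul_of_nonneg_left hx (by positivity : (0 : ℝ) ≤ k + 1)]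
      have : (x + y) ^ 2 ≤ (k + 2) * (dyadicSqSum c a k + dyadicSqSum c (a + 2 ^ k) k) := by
        refine le_of_mul_le_mul_right (hxy.trans ?_) (by positivity : (0 : ℝ) < k + 1)
        nlinarith [mul_le_mul_of_nonneg_left hxy' (by positivity : (0 : ℝ) ≤ k + 2)]
      nlinarith

end dyadicSqSum

lemma tendsto_sum_Ioc_div_of_dyadic (c : ℕ → ℝ)
    (h : Tendsto (fun k : ℕ => ((∑ i ∈ Ioc 0 (2 ^ k), c i) ^ 2
      + (k + 1) * dyadicSqSum c (2 ^ k) k) / 4 ^ k) atTop (𝓝 0)) :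
    Tendsto (fun n : ℕ => (∑ i ∈ Ioc 0 n, c i) / n) atTop (𝓝 0) := by
  set W := fun k : ℕ => ((∑ i ∈ Ioc 0 (2 ^ k), c i) ^ 2
      + (k + 1) * dyadicSqSum c (2 ^ k) k) / 4 ^ k
  have hlog : Tendsto (fun n => Nat.log 2 (n - 1)) atTop atTop :=
    tendsto_atTop_atTop.2 fun K => ⟨2 ^ K + 1, fun n hn =>
      Nat.le_log_of_pow_le one_lt_two (by omega)⟩
  have hbound : ∀ n ≥ 2, ((∑ i ∈ Ioc 0 n, c i) / n) ^ 2 ≤ 2 * W (Nat.log 2 (n - 1)) := by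
    intro n hn
    set k := Nat.log 2 (n - 1)
    have hk : 2 ^ k ≤ n - 1 := Nat.pow_log_le_self 2 (by omega)
    have hk' : n - 1 < 2 ^ (k + 1) := Nat.lt_pow_succ_log_self one_lt_two _
    obtain ⟨m, hnm⟩ : ∃ m, n = 2 ^ k + m := ⟨n - 2 ^ k, by omega⟩
    have hm : m ≤ 2 ^ k := by rw [pow_succ] at hk'; omega
    rw [hnm, ← sum_Ioc_consecutive c (Nat.zero_le _) (Nat.le_add_right _ m)]
    set x := ∑ i ∈ Ioc 0 (2 ^ k), c i
    set y := ∑ i ∈ Ioc (2 ^ k) (2 ^ k + m), c i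
    have hy : y ^ 2 ≤ (k + 1) * dyadicSqSum c (2 ^ k) k := dyadicSqSum.sq_sum_Ioc_le c hm _
    have hn : (2 : ℝ) ^ k ≤ ((2 ^ k + m : ℕ) : ℝ) := by push_cast; linarith [m.cast_nonneg (α := ℝ)]
    have h4 : (4 : ℝ) ^ k = ((2 : ℝ) ^ k) ^ 2 := by rw [← pow_mul, mul_comm, pow_mul]; norm_num
    rw [div_pow, div_le_iff₀ (by positivity)]
    simp only [W, h4]
    rw [mul_div_assoc', div_mul_eq_mul_div, le_div_iff₀ (by positivity)]
    calc (x + y) ^ 2 * ((2 : ℝ) ^ k) ^ 2 ≤ 2 * (x ^ 2 + y ^ 2) * ((2 ^ k + m : ℕ) : ℝ) ^ 2 := by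
          gcongr
          nlinarith [sq_nonneg (x - y)]
      _ ≤ _ := by gcongr
  have hsq : Tendsto (fun n : ℕ => ((∑ i ∈ Ioc 0 n, c i) / n) ^ 2) atTop (𝓝 0) := by
    refine squeeze_zero' (Eventually.of_forall fun n => sq_nonneg _)
      ((eventually_ge_atTop 2).mono hbound) ?_
    simpa using (h.comp hlog).const_mul 2
  refine (tendsto_zero_iff_abs_tendsto_zero _).2 ?_
  simpa [Function.comp_def, Real.sqrt_sq_eq_abs] using hsq.sqrt

lemma sum_range_sum_Ioc_two_pow (f : ℕ → ℝ) (K : ℕ) :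
    ∑ k ∈ range K, ∑ i ∈ Ioc (2 ^ k) (2 ^ (k + 1)), f i = ∑ i ∈ Ioc 1 (2 ^ K), f i := by
  induction K with
  | zero => simp
  | succ K ih =>
    rw [sum_range_succ, ih, sum_Ioc_consecutive f Nat.one_le_two_pow
      (Nat.pow_le_pow_right two_pos K.le_succ)]

lemma summable_sum_Ioc_two_pow {f : ℕ → ℝ} (hf : Summable f) (h0 : 0 ≤ f) :
    Summable fun k => ∑ i ∈ Ioc (2 ^ k) (2 ^ (k + 1)), f i :=
  summable_of_sum_range_le (fun _ => sum_nonneg fun i _ => h0 i) fun K => by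
    rw [sum_range_sum_Ioc_two_pow]
    exact hf.sum_le_tsum _ fun i _ => h0 i

lemma succ_sq_div_four_pow_le {k i : ℕ} (hi : i ∈ Ioc (2 ^ k) (2 ^ (k + 1))) :
    ((k : ℝ) + 1) ^ 2 / 4 ^ k ≤ 16 / Real.log 2 ^ 2 * (Real.log i ^ 2 / i ^ 2) := by
  obtain ⟨hki, hik⟩ := mem_Ioc.1 hi
  have hki' : (2 : ℝ) ^ k < i := by exact_mod_cast hki
  have hik' : (i : ℝ) ≤ 2 * 2 ^ k := by rw [← pow_succ']; exact_mod_cast hik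
  have hi2 : (2 : ℝ) ≤ i := by
    have := Nat.one_le_two_pow (n := k); exact_mod_cast (by omega : 2 ≤ i)
  have hklog : (k : ℝ) * Real.log 2 ≤ Real.log i := by
    rw [← Real.log_pow]; exact Real.log_le_log (by positivity) hki'.le
  have hlog : ((k : ℝ) + 1) * Real.log 2 ≤ 2 * Real.log i := by
    have := Real.log_le_log (by norm_num) hi2; linarith
  have h4 : (4 : ℝ) ^ k = (2 ^ k) ^ 2 := by rw [← pow_mul, mul_comm, pow_mul]; norm_num
  rw [h4, div_mul_div_comm, div_le_div_iff₀ (by positivity) (by positivity)]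
  have hsq : (((k : ℝ) + 1) * Real.log 2) ^ 2 ≤ (2 * Real.log i) ^ 2 :=
    pow_le_pow_left₀ (by positivity) hlog 2
  have hisq : (i : ℝ) ^ 2 ≤ (2 * 2 ^ k) ^ 2 := pow_le_pow_left₀ (by positivity) hik' 2
  calc ((k : ℝ) + 1) ^ 2 * (Real.log 2 ^ 2 * (i : ℝ) ^ 2)
      = (((k : ℝ) + 1) * Real.log 2) ^ 2 * (i : ℝ) ^ 2 := by ring
    _ ≤ (2 * Real.log i) ^ 2 * (2 * 2 ^ k) ^ 2 := by gcongr
    _ = 16 * Real.log i ^ 2 * (2 ^ k) ^ 2 := by ring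

section

variable {v : ℕ → ℝ}

lemma summable_succ_sq_mul_sum_Ioc_two_pow_div (hv : 0 ≤ v)
    (hsum : Summable fun i : ℕ => v i * Real.log i ^ 2 / i ^ 2) :
    Summable fun k : ℕ => ((k : ℝ) + 1) ^ 2 * (∑ i ∈ Ioc (2 ^ k) (2 ^ (k + 1)), v i) / 4 ^ k := by
  refine Summable.of_nonneg_of_le
    (fun k => div_nonneg (mul_nonneg (sq_nonneg _) (sum_nonneg fun i _ => hv i)) (by positivity))
    (fun k => ?_) ((summable_sum_Ioc_two_pow hsum fun i =>
      div_nonneg (mul_nonneg (hv i) (sq_nonneg _)) (sq_nonneg _)).mul_left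
      (16 / Real.log 2 ^ 2))
  rw [mul_comm, mul_div_assoc, sum_mul, mul_sum]
  refine sum_le_sum fun i hi => ?_
  calc v i * (((k : ℝ) + 1) ^ 2 / 4 ^ k)
      ≤ v i * (16 / Real.log 2 ^ 2 * (Real.log i ^ 2 / i ^ 2)) :=
        mul_le_mul_of_nonneg_left (succ_sq_div_four_pow_le hi) (hv i)
    _ = 16 / Real.log 2 ^ 2 * (v i * Real.log i ^ 2 / i ^ 2) := by ring

lemma summable_sum_Ioc_zero_two_pow_div (hv : 0 ≤ v)
    (hsum : Summable fun i : ℕ => v i * Real.log i ^ 2 / i ^ 2) :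
    Summable fun k : ℕ => (∑ i ∈ Ioc 0 (2 ^ k), v i) / 4 ^ k := by
  set a : ℕ → ℝ := fun j => (∑ i ∈ Ioc (2 ^ j) (2 ^ (j + 1)), v i) / 4 ^ j
  have ha0 : 0 ≤ a := fun j => div_nonneg (sum_nonneg fun i _ => hv i) (by positivity)
  have ha : Summable a := by
    refine Summable.of_nonneg_of_le ha0 (fun j => ?_)
      (summable_succ_sq_mul_sum_Ioc_two_pow_div hv hsum)
    refine div_le_div_of_nonneg_right (le_mul_of_one_le_left (sum_nonneg fun i _ => hv i) ?_)
      (by positivity)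
    exact one_le_pow₀ (by linarith [(j.cast_nonneg : (0 : ℝ) ≤ j)])
  have hgeom : Summable fun m : ℕ => (1 / 4 : ℝ) ^ m :=
    summable_geometric_of_lt_one (by norm_num) (by norm_num)
  -- the block decomposition of `(0, 2 ^ k]` turns the sequence into a Cauchy product
  have hconv := summable_sum_mul_range_of_summable_mul
    (ha.mul_of_nonneg hgeom ha0 fun m => by positivity)
  refine Summable.of_nonneg_of_le (fun k => div_nonneg (sum_nonneg fun i _ => hv i) (by positivity))
    (fun k => ?_) ((hgeom.mul_left (v 1)).add hconv)
  have hsplit : ∑ i ∈ Ioc 0 (2 ^ k), v i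
      = v 1 + ∑ j ∈ range k, ∑ i ∈ Ioc (2 ^ j) (2 ^ (j + 1)), v i := by
    rw [sum_range_sum_Ioc_two_pow, ← sum_Ioc_consecutive v zero_le_one Nat.one_le_two_pow,
      show Ioc 0 1 = {1} by decide, sum_singleton]
  have hterm : ∀ j ∈ range k, (∑ i ∈ Ioc (2 ^ j) (2 ^ (j + 1)), v i) / 4 ^ k
      = a j * (1 / 4) ^ (k - j) := by
    intro j hj
    have : (4 : ℝ) ^ k = 4 ^ j * 4 ^ (k - j) := by
      rw [← pow_add, Nat.add_sub_cancel' (mem_range.1 hj).le]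
    simp only [a, this, div_pow, one_pow]
    field_simp
  rw [hsplit, add_div, sum_div, sum_congr rfl hterm, div_eq_mul_one_div (v 1), one_div_pow]
  gcongr
  · exact fun j _ _ => mul_nonneg (ha0 j) (by positivity)
  · exact k.le_succ

end

lemma sum_comp_dist_le {r : ℕ → ℝ} (hr : 0 ≤ r) (hsum : Summable fun m => r (m + 1)) (i : ℕ)
    (s : Finset ℕ) : ∑ j ∈ s, r (Nat.dist i j) ≤ r 0 + 2 * ∑' m, r (m + 1) := by
  have hr' : Summable r := (summable_nat_add_iff 1).1 hsum
  have hZ : HasSum (fun n : ℤ => r n.natAbs) (r 0 + 2 * ∑' m, r (m + 1)) := by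
    have := HasSum.of_nat_of_neg_add_one (f := fun n : ℤ => r n.natAbs) hr'.hasSum hsum.hasSum
    rw [hr'.tsum_eq_zero_add] at this
    convert this using 1
    ring
  let e : ℕ ↪ ℤ := ⟨fun j => (j : ℤ) - i, fun j k h => by simpa using h⟩
  calc ∑ j ∈ s, r (Nat.dist i j) = ∑ n ∈ s.map e, r n.natAbs := by
        rw [sum_map]
        refine sum_congr rfl fun j _ => congrArg r ?_
        change i - j + (j - i) = ((j : ℤ) - i).natAbs
        omega
    _ ≤ r 0 + 2 * ∑' m, r (m + 1) :=
        hZ.tsum_eq ▸ hZ.summable.sum_le_tsum _ fun n _ => hr _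

section

variable {Ω : Type*} [MeasurableSpace Ω] {P : Measure Ω}

lemma ae_tendsto_zero_of_summable_integral {f : ℕ → Ω → ℝ} (h0 : ∀ k, 0 ≤ f k)
    (hint : ∀ k, Integrable (f k) P) (hsum : Summable fun k => ∫ ω, f k ω ∂P) :
    ∀ᵐ ω ∂P, Tendsto (fun k => f k ω) atTop (𝓝 0) := by
  have hnorm : ∀ k, ∫ ω, ‖f k ω‖ ∂P = ∫ ω, f k ω ∂P := fun k =>
    integral_congr_ae (Eventually.of_forall fun ω => Real.norm_of_nonneg (h0 k ω))
  have htop : ∑' k, eLpNorm (f k) 1 P ≠ ⊤ := by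
    simp_rw [eLpNorm_one_eq_lintegral_enorm, ← ofReal_integral_norm_eq_lintegral_enorm (hint _),
      hnorm, ← ENNReal.ofReal_tsum_of_nonneg (fun k => integral_nonneg (h0 k)) hsum]
    exact ENNReal.ofReal_ne_top
  filter_upwards [summable_norm_of_tsum_eLpNorm_ne_top le_rfl (fun k => (hint k).1) htop]
    with ω hω
  exact tendsto_zero_iff_norm_tendsto_zero.2 hω.tendsto_atTop_zero

lemma integral_sq_sum_le_sum_mul_sum_dist {Y : ℕ → Ω → ℝ} (hY : ∀ i, MemLp (Y i) 2 P)
    {s : Finset ℕ} {r v : ℕ → ℝ}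
    (hcov : ∀ i ∈ s, ∀ j ∈ s, ∫ ω, Y i ω * Y j ω ∂P ≤ r (Nat.dist i j) * ((v i + v j) / 2)) :
    ∫ ω, (∑ i ∈ s, Y i ω) ^ 2 ∂P ≤ ∑ i ∈ s, v i * ∑ j ∈ s, r (Nat.dist i j) := by
  have hint : ∀ i j, Integrable (fun ω => Y i ω * Y j ω) P := fun i j =>
    (hY i).integrable_mul (hY j)
  have hsym : ∑ i ∈ s, ∑ j ∈ s, r (Nat.dist i j) * ((v i + v j) / 2)
      = ∑ i ∈ s, ∑ j ∈ s, r (Nat.dist i j) * v i := by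
    have hswap : ∑ i ∈ s, ∑ j ∈ s, r (Nat.dist i j) * v j
        = ∑ i ∈ s, ∑ j ∈ s, r (Nat.dist i j) * v i := by
      rw [sum_comm]; simp_rw [Nat.dist_comm]
    simp_rw [mul_div_assoc', mul_add, add_div, sum_add_distrib, ← sum_div, hswap]
    ring
  calc ∫ ω, (∑ i ∈ s, Y i ω) ^ 2 ∂P = ∑ i ∈ s, ∑ j ∈ s, ∫ ω, Y i ω * Y j ω ∂P := by
        simp_rw [sq, sum_mul_sum]
        rw [integral_finsetSum _ fun i _ => integrable_finsetSum _ fun j _ => hint i j]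
        exact sum_congr rfl fun i _ => integral_finsetSum _ fun j _ => hint i j
    _ ≤ ∑ i ∈ s, ∑ j ∈ s, r (Nat.dist i j) * ((v i + v j) / 2) :=
        sum_le_sum fun i hi => sum_le_sum fun j hj => hcov i hi j hj
    _ = ∑ i ∈ s, v i * ∑ j ∈ s, r (Nat.dist i j) := by
        rw [hsym]; simp_rw [mul_sum, mul_comm]

lemma integral_sq_sum_Ioc_le_of_integral_mul_le {Y : ℕ → Ω → ℝ} (hY : ∀ i, MemLp (Y i) 2 P)
    {σ ρ : ℕ → ℝ} (hρ : ∀ m, 0 ≤ ρ m) (hρsum : Summable fun m => ρ (m + 1))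
    (hcov : ∀ i j, 1 ≤ i → i ≤ j → ∫ ω, Y i ω * Y j ω ∂P ≤ ρ (j - i) * (σ i * σ j)) (a b : ℕ) :
    ∫ ω, (∑ i ∈ Ioc a b, Y i ω) ^ 2 ∂P
      ≤ ∑ i ∈ Ioc a b, (ρ 0 + 2 * ∑' m, ρ (m + 1)) * σ i ^ 2 := by
  have hle : ∀ i j, 1 ≤ i → i ≤ j →
      ∫ ω, Y i ω * Y j ω ∂P ≤ ρ (Nat.dist i j) * ((σ i ^ 2 + σ j ^ 2) / 2) := by
    intro i j hi hij
    rw [show Nat.dist i j = j - i by simp only [Nat.dist]; omega]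
    refine (hcov i j hi hij).trans (mul_le_mul_of_nonneg_left ?_ (hρ _))
    linarith [two_mul_le_add_sq (σ i) (σ j)]
  calc ∫ ω, (∑ i ∈ Ioc a b, Y i ω) ^ 2 ∂P
      ≤ ∑ i ∈ Ioc a b, σ i ^ 2 * ∑ j ∈ Ioc a b, ρ (Nat.dist i j) := by
        refine integral_sq_sum_le_sum_mul_sum_dist hY fun i hi j hj => ?_
        have hi1 : 1 ≤ i := by have := (mem_Ioc.1 hi).1; omega
        have hj1 : 1 ≤ j := by have := (mem_Ioc.1 hj).1; omega
        rcases le_total i j with hij | hji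
        · exact hle i j hi1 hij
        · simpa only [mul_comm (Y i _), Nat.dist_comm, add_comm (σ i ^ 2)] using hle j i hj1 hji
    _ ≤ ∑ i ∈ Ioc a b, (ρ 0 + 2 * ∑' m, ρ (m + 1)) * σ i ^ 2 := by
        refine sum_le_sum fun i _ => ?_
        rw [mul_comm]
        exact mul_le_mul_of_nonneg_right (sum_comp_dist_le hρ hρsum i _) (sq_nonneg _)

lemma integrable_dyadicSqSum {Y : ℕ → Ω → ℝ} (hY : ∀ i, MemLp (Y i) 2 P) (a k : ℕ) :
    Integrable (fun ω => dyadicSqSum (fun i => Y i ω) a k) P := by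
  have hS : ∀ a b, Integrable (fun ω => (∑ i ∈ Ioc a b, Y i ω) ^ 2) P := fun a b =>
    (memLp_finsetSum _ fun i _ => hY i).integrable_sq
  induction k generalizing a with
  | zero => exact hS _ _
  | succ k ih => exact ((hS _ _).add (ih a)).add (ih _)

lemma integral_dyadicSqSum_le {Y : ℕ → Ω → ℝ} (hY : ∀ i, MemLp (Y i) 2 P) {w : ℕ → ℝ}
    (hblock : ∀ a b, ∫ ω, (∑ i ∈ Ioc a b, Y i ω) ^ 2 ∂P ≤ ∑ i ∈ Ioc a b, w i) (a k : ℕ) :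
    ∫ ω, dyadicSqSum (fun i => Y i ω) a k ∂P ≤ (k + 1) * ∑ i ∈ Ioc a (a + 2 ^ k), w i := by
  induction k generalizing a with
  | zero => simpa [dyadicSqSum] using hblock a (a + 1)
  | succ k ih =>
    have hS : Integrable (fun ω => (∑ i ∈ Ioc a (a + 2 ^ (k + 1)), Y i ω) ^ 2) P :=
      (memLp_finsetSum _ fun i _ => hY i).integrable_sq
    have hsplit : ∑ i ∈ Ioc a (a + 2 ^ (k + 1)), w i
        = ∑ i ∈ Ioc a (a + 2 ^ k), w i + ∑ i ∈ Ioc (a + 2 ^ k) (a + 2 ^ k + 2 ^ k), w i := by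
      rw [pow_succ, mul_two, ← add_assoc]
      exact (sum_Ioc_consecutive _ (Nat.le_add_right _ _) (Nat.le_add_right _ _)).symm
    have hG := integrable_dyadicSqSum hY a k
    have hG' := integrable_dyadicSqSum hY (a + 2 ^ k) k
    simp only [dyadicSqSum]
    rw [integral_add (by exact hS.add hG) hG', integral_add hS hG]
    have := hblock a (a + 2 ^ (k + 1))
    have := ih a
    have := ih (a + 2 ^ k)
    push_cast
    rw [hsplit] at *
    linarith

theorem ae_tendsto_sum_Ioc_div_of_integral_sq_le {Y : ℕ → Ω → ℝ} (hY : ∀ i, MemLp (Y i) 2 P)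
    {w : ℕ → ℝ} (hw : 0 ≤ w)
    (hblock : ∀ a b, ∫ ω, (∑ i ∈ Ioc a b, Y i ω) ^ 2 ∂P ≤ ∑ i ∈ Ioc a b, w i)
    (hsum : Summable fun i : ℕ => w i * Real.log i ^ 2 / i ^ 2) :
    ∀ᵐ ω ∂P, Tendsto (fun n : ℕ => (∑ i ∈ Ioc 0 n, Y i ω) / n) atTop (𝓝 0) := by
  set W : ℕ → Ω → ℝ := fun k ω => ((∑ i ∈ Ioc 0 (2 ^ k), Y i ω) ^ 2
      + (k + 1) * dyadicSqSum (fun i => Y i ω) (2 ^ k) k) / 4 ^ k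
  have hW0 : ∀ k, 0 ≤ W k := fun k ω =>
    div_nonneg (add_nonneg (sq_nonneg _) (mul_nonneg (by positivity) (dyadicSqSum.nonneg _ _ _)))
      (by positivity)
  have hS : ∀ k, Integrable (fun ω => (∑ i ∈ Ioc 0 (2 ^ k), Y i ω) ^ 2) P := fun k =>
    (memLp_finsetSum _ fun i _ => hY i).integrable_sq
  have hWint : ∀ k, Integrable (W k) P := fun k =>
    ((hS k).add ((integrable_dyadicSqSum hY _ k).const_mul _)).div_const _
  have hWle : ∀ k, ∫ ω, W k ω ∂P ≤ (∑ i ∈ Ioc 0 (2 ^ k), w i) / 4 ^ k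
      + ((k : ℝ) + 1) ^ 2 * (∑ i ∈ Ioc (2 ^ k) (2 ^ (k + 1)), w i) / 4 ^ k := by
    intro k
    have h1 := hblock 0 (2 ^ k)
    have h2 := integral_dyadicSqSum_le hY hblock (2 ^ k) k
    rw [← two_mul, ← pow_succ'] at h2
    simp only [W]
    rw [integral_div, integral_add (hS k) ((integrable_dyadicSqSum hY _ k).const_mul _),
      integral_const_mul, ← add_div, sq]
    refine div_le_div_of_nonneg_right ?_ (by positivity)
    have := mul_le_mul_of_nonneg_left h2 (by positivity : (0 : ℝ) ≤ k + 1)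
    linarith
  have hWsum : Summable fun k => ∫ ω, W k ω ∂P :=
    Summable.of_nonneg_of_le (fun k => integral_nonneg (hW0 k)) hWle
      ((summable_sum_Ioc_zero_two_pow_div hw hsum).add
        (summable_succ_sq_mul_sum_Ioc_two_pow_div hw hsum))
  filter_upwards [ae_tendsto_zero_of_summable_integral hW0 hWint hWsum] with ω hω
  exact tendsto_sum_Ioc_div_of_dyadic _ hω

end

theorem stmt_0_general {Ω : Type*} [MeasurableSpace Ω] (P : Measure Ω) [IsProbabilityMeasure P]
    (X : ℕ → Ω → ℝ) (μ σ ρ : ℕ → ℝ)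
    (hL2 : ∀ i, MeasureTheory.MemLp (X i) 2 P)
    (hρ : ∀ m, 0 ≤ ρ m ∧ ρ m ≤ 1)
    (hcov : ∀ i j, 1 ≤ i → i ≤ j →
      ∫ ω, (X i ω - μ i) * (X j ω - μ j) ∂P ≤ ρ (j - i) * (σ i * σ j))
    (hρsum : Summable fun m => ρ (m + 1))
    (hσsum : Summable fun i : ℕ => (σ i) ^ 2 * (Real.log i) ^ 2 / (i : ℝ) ^ 2) :
    ∀ᵐ ω ∂P, Filter.Tendsto
      (fun n : ℕ => (∑ i ∈ Finset.Icc 1 n, X i ω) / n - (∑ i ∈ Finset.Icc 1 n, μ i) / n)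
      Filter.atTop (nhds 0) := by
  set C := ρ 0 + 2 * ∑' m, ρ (m + 1)
  have hC : 0 ≤ C := add_nonneg (hρ 0).1 (mul_nonneg zero_le_two (tsum_nonneg fun m => (hρ _).1))
  have hY : ∀ i, MemLp (fun ω => X i ω - μ i) 2 P := fun i => (hL2 i).sub (memLp_const _)
  have hsum : Summable fun i : ℕ => C * σ i ^ 2 * Real.log i ^ 2 / i ^ 2 :=
    (hσsum.mul_left C).congr fun i => by ring
  filter_upwards [ae_tendsto_sum_Ioc_div_of_integral_sq_le hY (fun i => by positivity)
    (integral_sq_sum_Ioc_le_of_integral_mul_le hY (fun m => (hρ m).1) hρsum hcov) hsum] with ω hω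
  simpa only [div_sub_div_same, ← sum_sub_distrib, ← Icc_add_one_left_eq_Ioc, zero_add] using hω

/-- Law of Large Numbers for random variables with short-term dependence
(Serfling 1980, Theorem E). -/
theorem stmt_0 {Ω : Type*} [MeasurableSpace Ω] (P : Measure Ω) [IsProbabilityMeasure P]
    (X : ℕ → Ω → ℝ) (μ σ ρ : ℕ → ℝ)
    (hL2 : ∀ i, MeasureTheory.MemLp (X i) 2 P)
    (hmean : ∀ i, 1 ≤ i → ∫ ω, X i ω ∂P = μ i)
    (hvar : ∀ i, 1 ≤ i → ∫ ω, (X i ω - μ i) ^ 2 ∂P = (σ i) ^ 2)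
    (hσ : ∀ i, 0 ≤ σ i)
    (hρ : ∀ m, 0 ≤ ρ m ∧ ρ m ≤ 1)
    (hcov : ∀ i j, 1 ≤ i → i ≤ j →
      ∫ ω, (X i ω - μ i) * (X j ω - μ j) ∂P ≤ ρ (j - i) * (σ i * σ j))
    (hρsum : Summable fun m => ρ (m + 1))
    (hσsum : Summable fun i : ℕ => (σ i) ^ 2 * (Real.log i) ^ 2 / (i : ℝ) ^ 2) :
    ∀ᵐ ω ∂P, Filter.Tendsto
      (fun n : ℕ => (∑ i ∈ Finset.Icc 1 n, X i ω) / n - (∑ i ∈ Finset.Icc 1 n, μ i) / n)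
      Filter.atTop (nhds 0) :=
  stmt_0_general P X μ σ ρ hL2 hρ hcov hρsum hσsum
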